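/- Let φ be a nonerasing substitution on a finite alphabet A, prolongable over a letter a₁, such that every letter of A occurs in the fixed point X = φ^∞(a₁), every letter is φ-growing, and every letter a has a growth order (d a, θ a) with θ a > 1. Let (D, Θ) be the maximal pair among {(d a, θ a) : a ∈ A} with respect to the order (d₁,θ₁) < (d₂,θ₂) iff θ₁ < θ₂ or (θ₁ = θ₂ and d₁ < d₂). Then the set {n : ℕ | (d (X n), θ (X n)) = (D, Θ)} is infinite. -/

import Mathlib

/-- Extension of a morphism `φ : A → List B` to finite words: `φ†(w) = (w.map φ).flatten`. -/
def applyMorph {A B : Type*} (φ : A → List B) (w : List A) : List B :=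
  (w.map φ).flatten

/-- The finite word `v` occurs in the infinite word `W` at starting position `i`. -/
def OccursAt {A : Type*} (v : List A) (W : ℕ → A) (i : ℕ) : Prop :=
  ∀ (j : ℕ) (hj : j < v.length), W (i + j) = v.get ⟨j, hj⟩

/-- The finite word `v` is a factor of the infinite word `W`. -/
def FactorOf {A : Type*} (v : List A) (W : ℕ → A) : Prop :=
  ∃ i, OccursAt v W i

/-- The finite word `v` is a prefix of the infinite word `W`. -/
def PrefixOf {A : Type*} (v : List A) (W : ℕ → A) : Prop :=
  OccursAt v W 0

/-- `W` is uniformly recurrent. -/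
def UniformlyRecurrent {A : Type*} (W : ℕ → A) : Prop :=
  ∀ u, FactorOf u W → ∃ N, ∀ v, FactorOf v W → v.length = N → u <:+: v

/-- `W` is eventually periodic. -/
def EventuallyPeriodic {A : Type*} (W : ℕ → A) : Prop :=
  ∃ k t : ℕ, 1 ≤ t ∧ ∀ i, k ≤ i → W (i + t) = W i

/-- The substitution `φ` is prolongable over the letter `a₁`. -/
def Prolongable {A : Type*} (φ : A → List A) (a₁ : A) : Prop :=
  ∃ v, φ a₁ = a₁ :: v ∧ ∀ k : ℕ, (applyMorph φ)^[k] v ≠ []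

/-- The morphism `φ` is nonerasing. -/
def Nonerasing {A B : Type*} (φ : A → List B) : Prop :=
  ∀ a, φ a ≠ []

/-- `X` is the fixed point `φ^∞(a₁)`: every `φ^n([a₁])` is a prefix of `X`. -/
def IsFixedPoint {A : Type*} (φ : A → List A) (a₁ : A) (X : ℕ → A) : Prop :=
  ∀ n : ℕ, PrefixOf ((applyMorph φ)^[n] [a₁]) X

/-- `W` is the infinite word `ψ(φ^∞(a₁))`: the words `ψ(φ^n([a₁]))` have unbounded
length and each of them is a prefix of `W`. -/
def IsMorphicWord {A B : Type*} (φ : A → List A) (ψ : A → List B) (a₁ : A)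
    (W : ℕ → B) : Prop :=
  (∀ N : ℕ, ∃ k : ℕ, N ≤ (applyMorph ψ ((applyMorph φ)^[k] [a₁])).length) ∧
  ∀ k : ℕ, PrefixOf (applyMorph ψ ((applyMorph φ)^[k] [a₁])) W

/-- The letter `a` is `φ`-growing: `n ↦ (φ^n [a]).length` is unbounded. -/
def GrowingLetter {A : Type*} (φ : A → List A) (a : A) : Prop :=
  ∀ N : ℕ, ∃ n : ℕ, N ≤ ((applyMorph φ)^[n] [a]).length

/-- The finite word `w` is `φ`-bounded: the sequence `n ↦ φ^n(w)` is eventually periodic. -/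
def PhiBounded {A : Type*} (φ : A → List A) (w : List A) : Prop :=
  ∃ n₀ p : ℕ, 1 ≤ p ∧ ∀ n, n₀ ≤ n → (applyMorph φ)^[n + p] w = (applyMorph φ)^[n] w

/-- Letter `a` has growth order `(d, θ)` with respect to `φ`. -/
def HasGrowthOrder {A : Type*} (φ : A → List A) (a : A) (d : ℕ) (θ : ℝ) : Prop :=
  1 ≤ θ ∧ ∃ c C : ℝ, 0 < c ∧ c ≤ C ∧ ∀ n : ℕ, 1 ≤ n →
    c * (n : ℝ) ^ d * θ ^ n ≤ (((applyMorph φ)^[n] [a]).length : ℝ) ∧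
    (((applyMorph φ)^[n] [a]).length : ℝ) ≤ C * (n : ℝ) ^ d * θ ^ n

/-- The substitution `φ` is primitive. -/
def PrimitiveSubst {A : Type*} (φ : A → List A) : Prop :=
  ∃ k : ℕ, 1 ≤ k ∧ ∀ a b : A, b ∈ (applyMorph φ)^[k] [a]

/-- `v` is a cyclic shift of `u`. -/
def IsCyclicShift {A : Type*} (v u : List A) : Prop :=
  ∃ x y : List A, u = x ++ y ∧ v = y ++ x

/-- `W` is purely periodic with (nonempty) period `u`. -/
def PurelyPeriodicWith {A : Type*} (W : ℕ → A) (u : List A) : Prop :=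
  ∃ hu : u ≠ [], ∀ i : ℕ, W i = u.get ⟨i % u.length, Nat.mod_lt i (List.length_pos_iff.mpr hu)⟩

/-- `W` is recurrent: every factor occurs at arbitrarily large starting positions. -/
def RecurrentWord {A : Type*} (W : ℕ → A) : Prop :=
  ∀ u, FactorOf u W → ∀ N : ℕ, ∃ i, N ≤ i ∧ OccursAt u W i

/-- The letter `a` is recurrent: it occurs in some `φ^k [a]`, `k ≥ 1`. -/
def RecurrentLetter {A : Type*} (φ : A → List A) (a : A) : Prop :=
  ∃ k : ℕ, 1 ≤ k ∧ a ∈ (applyMorph φ)^[k] [a]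

/-!
Put `g n = n ^ D * Θ ^ n`. Letters of maximal order satisfy `g = O(|φⁿ a|)`, all other letters
`|φⁿ a| = o(g)`. If `b` is maximal then every `φᵏ b` contains a maximal letter, since otherwise
`|φⁿ⁺ᵏ b| = |φⁿ (φᵏ b)| = o(g n)`. As `X` is invariant under `φ`, a maximal letter at a position
`m ≥ 1` of `X` yields, for each `k`, a maximal letter inside the occurrence of `φᵏ (X m)` in `X`,
which starts beyond `|φᵏ a₁| → ∞`. Such an `m` exists: if `X 0 = a₁` were the only maximal letter,
then writing `φ a₁ = a₁ v`, the length `|φⁿ a₁| = 1 + ∑_{j<n} |φʲ v|` would be `o(g)`, because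
`∑_{j<n} g j = O(g n)` for `Θ > 1`.
-/
open Filter Asymptotics Finset

section Words

variable {A : Type*} (φ : A → List A)

@[simp]
theorem applyMorph_nil : applyMorph φ [] = [] := rfl

@[simp]
theorem applyMorph_append (u w : List A) :
    applyMorph φ (u ++ w) = applyMorph φ u ++ applyMorph φ w := by
  simp [applyMorph]

theorem iterate_applyMorph_nil (k : ℕ) : (applyMorph φ)^[k] [] = [] :=
  Function.iterate_fixed (applyMorph_nil φ) k

theorem iterate_applyMorph_append (k : ℕ) (u w : List A) :
    (applyMorph φ)^[k] (u ++ w) = (applyMorph φ)^[k] u ++ (applyMorph φ)^[k] w :=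
  Function.Semiconj₂.iterate (applyMorph_append φ) k u w

theorem List.IsPrefix.iterate_applyMorph {u w : List A} (h : u <+: w) (k : ℕ) :
    (applyMorph φ)^[k] u <+: (applyMorph φ)^[k] w := by
  obtain ⟨t, rfl⟩ := h
  exact ⟨_, (iterate_applyMorph_append φ k u t).symm⟩

def iterLength (w : List A) (n : ℕ) : ℝ :=
  ((applyMorph φ)^[n] w).length

theorem iterLength_nil : iterLength φ [] = 0 := by
  ext n
  simp [iterLength, iterate_applyMorph_nil]

theorem iterLength_append (u w : List A) :
    iterLength φ (u ++ w) = iterLength φ u + iterLength φ w := by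
  ext n
  simp [iterLength, iterate_applyMorph_append]

theorem iterLength_iterate (w : List A) (k : ℕ) :
    iterLength φ ((applyMorph φ)^[k] w) = fun n ↦ iterLength φ w (n + k) := by
  ext n
  simp [iterLength, Function.iterate_add_apply]

theorem iterLength_of_cons {a : A} {v : List A} (hv : φ a = a :: v) :
    iterLength φ [a] = fun n ↦ 1 + ∑ j ∈ range n, iterLength φ v j := by
  ext n
  induction n with
  | zero => simp [iterLength]
  | succ n ih =>
    have h := congrFun (iterLength_iterate φ [a] 1) n
    rw [show (applyMorph φ)^[1] [a] = [a] ++ v by simp [applyMorph, hv], iterLength_append] at h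
    rw [sum_range_succ, ← add_assoc, ← ih]
    exact h.symm

theorem isLittleO_iterLength_of_forall_mem {l : Filter ℕ} {g : ℕ → ℝ} {w : List A}
    (h : ∀ c ∈ w, iterLength φ [c] =o[l] g) : iterLength φ w =o[l] g := by
  induction w with
  | nil => exact iterLength_nil φ ▸ isLittleO_zero g l
  | cons b w ih =>
    rw [← List.singleton_append, iterLength_append]
    exact (h b (by simp)).add (ih fun c hc ↦ h c (by simp [hc]))

end Words

section Growth

def growthFn (d : ℕ) (θ : ℝ) (n : ℕ) : ℝ :=
  (n : ℝ) ^ d * θ ^ n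

variable {d : ℕ} {θ : ℝ}

theorem growthFn_nonneg (hθ : 0 ≤ θ) : 0 ≤ growthFn d θ :=
  fun n ↦ by unfold growthFn; positivity

theorem growthFn_monotone (hθ : 1 ≤ θ) : Monotone (growthFn d θ) :=
  Monotone.mul (fun _ _ h ↦ by gcongr) (pow_right_mono₀ hθ)
    (fun _ ↦ by positivity) (fun _ ↦ by positivity)

theorem tendsto_growthFn_atTop (hθ : 1 < θ) : Tendsto (growthFn d θ) atTop atTop := by
  refine tendsto_atTop_mono' atTop ?_ (tendsto_pow_atTop_atTop_of_one_lt hθ)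
  filter_upwards [eventually_ge_atTop 1] with n hn
  exact le_mul_of_one_le_left (by positivity) (one_le_pow₀ (by exact_mod_cast hn))

theorem sum_range_growthFn_isBigO (hθ : 1 < θ) :
    (fun n ↦ ∑ j ∈ range n, growthFn d θ j) =O[atTop] growthFn d θ := by
  refine .of_bound (θ - 1)⁻¹ (.of_forall fun n ↦ ?_)
  have hθ' : 0 < θ - 1 := sub_pos.2 hθ
  rw [Real.norm_of_nonneg (sum_nonneg fun j _ ↦ growthFn_nonneg (by linarith) j),
    Real.norm_of_nonneg (growthFn_nonneg (by linarith) n)]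
  calc ∑ j ∈ range n, growthFn d θ j
      ≤ ∑ j ∈ range n, (n : ℝ) ^ d * θ ^ j :=
        sum_le_sum fun j hj ↦ by
          unfold growthFn
          gcongr
          exact (mem_range.1 hj).le
    _ = (n : ℝ) ^ d * ((θ ^ n - 1) / (θ - 1)) := by rw [← mul_sum, geom_sum_eq hθ.ne']
    _ ≤ (n : ℝ) ^ d * (θ ^ n / (θ - 1)) := by gcongr; linarith
    _ = (θ - 1)⁻¹ * growthFn d θ n := by unfold growthFn; ring

theorem growthFn_isLittleO_growthFn {e : ℕ} {Θ : ℝ} (hθ : 0 ≤ θ) (hΘ : 1 ≤ Θ)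
    (h : θ < Θ ∨ θ = Θ ∧ d < e) : growthFn d θ =o[atTop] growthFn e Θ := by
  rcases h with h | ⟨rfl, h⟩
  · have hpow : (fun n : ℕ ↦ Θ ^ n) =O[atTop] growthFn e Θ := by
      refine .of_bound 1 ?_
      filter_upwards [eventually_ge_atTop 1] with n hn
      rw [Real.norm_of_nonneg (by positivity), Real.norm_of_nonneg (by unfold growthFn; positivity),
        one_mul, growthFn]
      exact le_mul_of_one_le_left (by positivity) (one_le_pow₀ (by exact_mod_cast hn))
    exact (isLittleO_pow_const_mul_const_pow_const_pow_of_norm_lt d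
      (by rwa [Real.norm_of_nonneg hθ])).trans_isBigO hpow
  · exact ((isLittleO_pow_pow_atTop_of_lt h).comp_tendsto tendsto_natCast_atTop_atTop).mul_isBigO
      (isBigO_refl (fun n : ℕ ↦ θ ^ n) atTop)

theorem HasGrowthOrder.isTheta {A : Type*} {φ : A → List A} {a : A}
    (h : HasGrowthOrder φ a d θ) : iterLength φ [a] =Θ[atTop] growthFn d θ := by
  obtain ⟨hθ, c, C, hc, -, hbd⟩ := h
  have hg : 0 ≤ growthFn d θ := growthFn_nonneg (by linarith)
  constructor
  · refine .of_bound C ?_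
    filter_upwards [eventually_ge_atTop 1] with n hn
    rw [Real.norm_of_nonneg (by unfold iterLength; positivity), Real.norm_of_nonneg (hg n),
      growthFn, ← mul_assoc]
    exact (hbd n hn).2
  · refine .of_bound c⁻¹ ?_
    filter_upwards [eventually_ge_atTop 1] with n hn
    rw [Real.norm_of_nonneg (hg n), Real.norm_of_nonneg (by unfold iterLength; positivity),
      le_inv_mul_iff₀ hc, growthFn, ← mul_assoc]
    exact (hbd n hn).1

theorem isLittleO_sum_range_of_isBigO {f g : ℕ → ℝ} (hf : f =o[atTop] g) (hg : 0 ≤ g)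
    (hg' : Tendsto g atTop atTop) (hsum : (fun n ↦ ∑ j ∈ range n, g j) =O[atTop] g) :
    (fun n ↦ ∑ j ∈ range n, f j) =o[atTop] g := by
  refine (hf.sum_range hg (tendsto_atTop_atTop.2 fun b ↦ ?_)).trans_isBigO hsum
  obtain ⟨N, hN⟩ := tendsto_atTop_atTop.1 hg' b
  exact ⟨N + 1, fun n hn ↦
    (hN N le_rfl).trans (single_le_sum (fun j _ ↦ hg j) (mem_range.2 (by omega)))⟩

end Growth

section Dominance

variable {A : Type*} {φ : A → List A} {g : ℕ → ℝ} {P : A → Prop}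

theorem exists_mem_iterate_of_isBigO (hg : Monotone g) (hg' : Tendsto g atTop atTop)
    (hneg : ∀ a, ¬P a → iterLength φ [a] =o[atTop] g) {b : A}
    (hb : g =O[atTop] iterLength φ [b]) (k : ℕ) : ∃ c ∈ (applyMorph φ)^[k] [b], P c := by
  by_contra! h
  have hw : iterLength φ ((applyMorph φ)^[k] [b]) =o[atTop] g :=
    isLittleO_iterLength_of_forall_mem φ fun c hc ↦ hneg c (h c hc)
  rw [iterLength_iterate] at hw
  have hshift : g =O[atTop] fun n ↦ g (n + k) := by
    refine .of_bound 1 ?_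
    filter_upwards [hg'.eventually_ge_atTop 0] with n hn
    rw [Real.norm_of_nonneg hn, Real.norm_of_nonneg (hn.trans (hg (by omega))), one_mul]
    exact hg (by omega)
  refine isLittleO_irrefl ?_
    ((hshift.trans (hb.comp_tendsto (tendsto_add_atTop_nat k))).trans_isLittleO hw)
  exact (hg'.eventually_gt_atTop 0).frequently.mono fun n hn ↦ hn.ne'

theorem exists_mem_of_cons_of_isBigO (hg : 0 ≤ g) (hg' : Tendsto g atTop atTop)
    (hsum : (fun n ↦ ∑ j ∈ range n, g j) =O[atTop] g)
    (hneg : ∀ a, ¬P a → iterLength φ [a] =o[atTop] g) {a : A} {v : List A} (hv : φ a = a :: v)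
    (ha : g =O[atTop] iterLength φ [a]) : ∃ c ∈ v, P c := by
  by_contra! h
  have hv' : iterLength φ v =o[atTop] g :=
    isLittleO_iterLength_of_forall_mem φ fun c hc ↦ hneg c (h c hc)
  have hone : (fun _ ↦ (1 : ℝ)) =o[atTop] g :=
    isLittleO_one_left_iff ℝ |>.2 (tendsto_norm_atTop_atTop.comp hg')
  have hsmall : iterLength φ [a] =o[atTop] g := by
    rw [iterLength_of_cons φ hv]
    exact hone.add (isLittleO_sum_range_of_isBigO hv' hg hg' hsum)
  refine isLittleO_irrefl ?_ (ha.trans_isLittleO hsmall)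
  exact (hg'.eventually_gt_atTop 0).frequently.mono fun n hn ↦ hn.ne'

end Dominance

section FixedPoint

variable {A : Type*} {X : ℕ → A}

theorem OccursAt.of_prefix {u w : List A} {i : ℕ} (h : OccursAt w X i) (hu : u <+: w) :
    OccursAt u X i := fun j hj ↦ by
  simpa [hu.getElem hj] using h j (hj.trans_le hu.length_le)

theorem OccursAt.append_right {u w : List A} {i : ℕ} (h : OccursAt (u ++ w) X i) :
    OccursAt w X (i + u.length) := fun j hj ↦ by
  simpa [add_assoc] using h (u.length + j) (by simp [hj])

theorem OccursAt.exists_add_eq {w : List A} {i : ℕ} {c : A} (h : OccursAt w X i) (hc : c ∈ w) :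
    ∃ j, X (i + j) = c := by
  obtain ⟨j, hj, rfl⟩ := List.mem_iff_getElem.1 hc
  exact ⟨j, h j hj⟩

theorem prefixOf_map_range (X : ℕ → A) (m : ℕ) : PrefixOf ((List.range m).map X) X :=
  fun j hj ↦ by simp

theorem PrefixOf.isPrefix_of_length_le {u w : List A} (hu : PrefixOf u X) (hw : PrefixOf w X)
    (h : u.length ≤ w.length) : u <+: w := by
  rw [List.prefix_iff_eq_take]
  refine List.ext_getElem (by simpa using h) fun j hj _ ↦ ?_
  have hwj := hw j (by omega)
  simp only [zero_add, List.get_eq_getElem] at hwj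
  simpa [← hwj] using (hu j hj).symm

variable {φ : A → List A} {a₁ : A}

theorem IsFixedPoint.apply_zero (hX : IsFixedPoint φ a₁ X) : X 0 = a₁ := by
  simpa using hX 0 0

theorem IsFixedPoint.prefixOf_iterate (hX : IsFixedPoint φ a₁ X) (ha₁ : GrowingLetter φ a₁)
    {u : List A} (hu : PrefixOf u X) (k : ℕ) : PrefixOf ((applyMorph φ)^[k] u) X := by
  obtain ⟨n, hn⟩ := ha₁ u.length
  have h := (hu.isPrefix_of_length_le (hX n) hn).iterate_applyMorph φ k
  rw [← Function.iterate_add_apply] at h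
  exact (hX (k + n)).of_prefix h

theorem IsFixedPoint.exists_occursAt_iterate (hX : IsFixedPoint φ a₁ X)
    (ha₁ : GrowingLetter φ a₁) {m : ℕ} (hm : 1 ≤ m) (k : ℕ) :
    ∃ i, ((applyMorph φ)^[k] [a₁]).length ≤ i ∧ OccursAt ((applyMorph φ)^[k] [X m]) X i := by
  set u := (List.range m).map X
  have hu : PrefixOf (u ++ [X m]) X := by
    simpa [u, List.range_succ] using prefixOf_map_range X (m + 1)
  have hk := hX.prefixOf_iterate ha₁ hu k
  rw [iterate_applyMorph_append] at hk
  refine ⟨_, ?_, hk.append_right⟩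
  have hX0 : [a₁] <+: u := by
    have h := (prefixOf_map_range X 1).isPrefix_of_length_le (prefixOf_map_range X m)
      (by simpa using hm)
    simpa [← hX.apply_zero] using h
  simpa using (hX0.iterate_applyMorph φ k).length_le

theorem IsFixedPoint.exists_pos_apply {P : A → Prop} (hX : IsFixedPoint φ a₁ X) {v : List A}
    (hv : φ a₁ = a₁ :: v) (hP : ∃ n, P (X n)) (ha₁ : P a₁ → ∃ c ∈ v, P c) :
    ∃ m, 1 ≤ m ∧ P (X m) := by
  obtain ⟨_ | n, hn⟩ := hP
  · have hv' : OccursAt ([a₁] ++ v) X 0 := by simpa [PrefixOf, applyMorph, hv] using hX 1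
    obtain ⟨c, hc, hPc⟩ := ha₁ (by simpa [← hX.apply_zero] using hn)
    obtain ⟨j, hj⟩ := hv'.append_right.exists_add_eq hc
    exact ⟨0 + [a₁].length + j, by simp, hj ▸ hPc⟩
  · exact ⟨n + 1, by omega, hn⟩

theorem IsFixedPoint.infinite_setOf_apply {P : A → Prop} (hX : IsFixedPoint φ a₁ X)
    (ha₁ : GrowingLetter φ a₁) {m : ℕ} (hm : 1 ≤ m)
    (hiter : ∀ k, ∃ c ∈ (applyMorph φ)^[k] [X m], P c) : {n | P (X n)}.Infinite := by
  refine Set.infinite_of_forall_exists_gt fun N ↦ ?_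
  obtain ⟨k, hk⟩ := ha₁ (N + 1)
  obtain ⟨i, hi, hocc⟩ := hX.exists_occursAt_iterate ha₁ hm k
  obtain ⟨c, hc, hPc⟩ := hiter k
  obtain ⟨j, hj⟩ := hocc.exists_add_eq hc
  exact ⟨i + j, by simpa [hj] using hPc, by omega⟩

end FixedPoint

theorem infinitely_many_maximal_growth_letters_general {A : Type*}
    (φ : A → List A) (a₁ : A) (hpro : Prolongable φ a₁)
    (X : ℕ → A) (hX : IsFixedPoint φ a₁ X)
    (hocc : ∀ a : A, ∃ n : ℕ, X n = a)
    (hgrow : ∀ a : A, GrowingLetter φ a)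
    (d : A → ℕ) (θ : A → ℝ) (hθ : ∀ a : A, 1 < θ a)
    (hord : ∀ a : A, HasGrowthOrder φ a (d a) (θ a))
    (D : ℕ) (Θ : ℝ)
    (hmem : ∃ a : A, d a = D ∧ θ a = Θ)
    (hmax : ∀ a : A, θ a < Θ ∨ (θ a = Θ ∧ d a ≤ D)) :
    {n : ℕ | d (X n) = D ∧ θ (X n) = Θ}.Infinite := by
  obtain ⟨a₀, rfl, rfl⟩ := hmem
  have hΘ := hθ a₀
  have hdom : ∀ a, d a = d a₀ ∧ θ a = θ a₀ →
      growthFn (d a₀) (θ a₀) =O[atTop] iterLength φ [a] := by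
    rintro a ⟨hda, hθa⟩
    simpa [hda, hθa] using (hord a).isTheta.isBigO_symm
  have hneg : ∀ a, ¬(d a = d a₀ ∧ θ a = θ a₀) →
      iterLength φ [a] =o[atTop] growthFn (d a₀) (θ a₀) := fun a ha ↦
    (hord a).isTheta.isBigO.trans_isLittleO <|
      growthFn_isLittleO_growthFn (zero_le_one.trans (hord a).1) hΘ.le <|
        (hmax a).imp_right fun h ↦ ⟨h.1, h.2.lt_of_ne fun h' ↦ ha ⟨h', h.1⟩⟩
  obtain ⟨v, hv, -⟩ := hpro
  obtain ⟨n₀, hn₀⟩ := hocc a₀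
  obtain ⟨m, hm, hXm⟩ := hX.exists_pos_apply hv ⟨n₀, by simp [hn₀]⟩ fun ha₁ ↦
    exists_mem_of_cons_of_isBigO (growthFn_nonneg (by linarith)) (tendsto_growthFn_atTop hΘ)
      (sum_range_growthFn_isBigO hΘ) hneg hv (hdom a₁ ha₁)
  exact hX.infinite_setOf_apply (hgrow a₁) hm <| exists_mem_iterate_of_isBigO
    (growthFn_monotone hΘ.le) (tendsto_growthFn_atTop hΘ) hneg (hdom _ hXm)

/-- the fixed point contains infinitely many occurrences of letters
of maximal growth order. -/
theorem infinitely_many_maximal_growth_letters {A : Type*} [Fintype A]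
    (φ : A → List A) (a₁ : A) (hne : Nonerasing φ) (hpro : Prolongable φ a₁)
    (X : ℕ → A) (hX : IsFixedPoint φ a₁ X)
    (hocc : ∀ a : A, ∃ n : ℕ, X n = a)
    (hgrow : ∀ a : A, GrowingLetter φ a)
    (d : A → ℕ) (θ : A → ℝ) (hθ : ∀ a : A, 1 < θ a)
    (hord : ∀ a : A, HasGrowthOrder φ a (d a) (θ a))
    (D : ℕ) (Θ : ℝ)
    (hmem : ∃ a : A, d a = D ∧ θ a = Θ)
    (hmax : ∀ a : A, θ a < Θ ∨ (θ a = Θ ∧ d a ≤ D)) :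
    {n : ℕ | d (X n) = D ∧ θ (X n) = Θ}.Infinite :=
  infinitely_many_maximal_growth_letters_general φ a₁ hpro X hX hocc hgrow d θ hθ hord D Θ hmem hmax
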